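/- arXiv:0710.0800 — 4 statements merged into one kernel-verified Lean document; each statement's English description precedes it below -/
import Mathlib

section
/- The thermodynamic limit of the pressure exists: there is a real number p (depending on the parameters α, J11, J12, J22, h1, h2) such that p_N → p as N → ∞. -/
open Real Filter

noncomputable def spin (b : Bool) : ℝ := if b then 1 else -1

/-- The Hamiltonian of the bipartite mean field model: the first `N1` sites form
block `A`, the remaining `N2` sites form block `B`. -/
noncomputable def ham (J11 J12 J22 h1 h2 : ℝ) (N1 N2 : ℕ)
    (σ : Fin (N1 + N2) → Bool) : ℝ :=
  -(1 / (2 * ((N1 + N2 : ℕ) : ℝ))) *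
      (J11 * ∑ i : Fin (N1 + N2), ∑ j : Fin (N1 + N2),
          (if (i : ℕ) < N1 ∧ (j : ℕ) < N1 then spin (σ i) * spin (σ j) else 0)
        + 2 * J12 * ∑ i : Fin (N1 + N2), ∑ j : Fin (N1 + N2),
          (if (i : ℕ) < N1 ∧ N1 ≤ (j : ℕ) then spin (σ i) * spin (σ j) else 0)
        + J22 * ∑ i : Fin (N1 + N2), ∑ j : Fin (N1 + N2),
          (if N1 ≤ (i : ℕ) ∧ N1 ≤ (j : ℕ) then spin (σ i) * spin (σ j) else 0))
    - h1 * ∑ i : Fin (N1 + N2), (if (i : ℕ) < N1 then spin (σ i) else 0)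
    - h2 * ∑ i : Fin (N1 + N2), (if N1 ≤ (i : ℕ) then spin (σ i) else 0)

/-- The pressure per particle `p_N = (1/N) log Σ_σ exp(-H_N(σ))`. -/
noncomputable def pressure (J11 J12 J22 h1 h2 : ℝ) (N1 N2 : ℕ) : ℝ :=
  (1 / ((N1 + N2 : ℕ) : ℝ)) *
    Real.log (∑ σ : Fin (N1 + N2) → Bool,
      Real.exp (-(ham J11 J12 J22 h1 h2 N1 N2 σ)))

/-!
Grouping spin configurations by the numbers `k₁, k₂` of up spins in the two blocks writes `Z_N`
as a sum of `(N₁ + 1)(N₂ + 1)` terms `C(N₁, k₁) C(N₂, k₂) exp (N E(m₁, m₂))`, where `E` is the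
quadratic mean-field energy of the block magnetizations. By Stirling,
`log C(n, k) = n H(k / n) + O(log n)` with `H` the binary entropy, so up to `O(log N / N)` the
pressure `p_N` is the largest value of `Ψ(a, x, y) = a H(x) + (1 - a) H(y)
+ E(a(2x - 1), (1 - a)(2y - 1))`, `a = N₁ / N`, on the grid `x = k₁ / N₁, y = k₂ / N₂` of the
unit square. As `Ψ` is continuous and the square is compact, `a ↦ sup Ψ(a, ·)` is continuous and
the grid maxima converge to `sup Ψ(α, ·)`.
-/

open Real Filter Topology Finset
open scoped Nat

namespace BipartiteMeanField

theorem log_factorial_le (n : ℕ) : log n ! ≤ n * log n - n + log n / 2 + 1 := by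
  rcases n with _ | m
  · simp
  have h := Stirling.log_stirlingSeq'_antitone (Nat.zero_le m)
  simp only [Function.comp_apply, Nat.succ_eq_add_one, zero_add, Stirling.stirlingSeq_one,
    Stirling.log_stirlingSeq_formula] at h
  rw [log_div (exp_ne_zero 1) (by positivity), log_exp, log_sqrt zero_le_two,
    log_mul two_ne_zero (by positivity), log_div (by positivity) (exp_ne_zero 1), log_exp] at h
  linarith

theorem mul_log_sub_le_log_factorial (n : ℕ) : n * log n - n ≤ log n ! := by
  rcases eq_or_ne n 0 with rfl | hn
  · simp
  have h := Stirling.le_log_factorial_stirling hn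
  have h2π : 0 ≤ log (2 * π) := log_nonneg (by linarith [pi_gt_three])
  linarith [log_natCast_nonneg n]

theorem add_mul_binEntropy_div_add (a b : ℝ) :
    (a + b) * binEntropy (a / (a + b)) = (a + b) * log (a + b) - a * log a - b * log b := by
  rcases eq_or_ne (a + b) 0 with hab | hab
  · obtain rfl : b = -a := by linarith
    simp
  have hlog (c : ℝ) : c * log (c / (a + b)) = c * log c - c * log (a + b) := by
    rcases eq_or_ne c 0 with rfl | hc
    · simp
    · rw [log_div hc hab, mul_sub]
  have hb : 1 - a / (a + b) = b / (a + b) := by field_simp; ring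
  rw [binEntropy_eq_negMulLog_add_negMulLog_one_sub, hb, negMulLog, negMulLog]
  calc (a + b) * (-(a / (a + b)) * log (a / (a + b)) + -(b / (a + b)) * log (b / (a + b)))
      = -(a * log (a / (a + b))) - b * log (b / (a + b)) := by field_simp; ring
    _ = _ := by rw [hlog, hlog]; ring

theorem log_natCast_le_log_natCast {m n : ℕ} (h : m ≤ n) : log m ≤ log n := by
  rcases m.eq_zero_or_pos with rfl | hm
  · simpa using log_natCast_nonneg n
  · exact log_le_log (by positivity) (by exact_mod_cast h)

theorem abs_log_choose_sub_mul_binEntropy_le {n k : ℕ} (hk : k ≤ n) :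
    |log (n.choose k) - n * binEntropy (k / n)| ≤ log n + 2 := by
  have hchoose : log (n.choose k) = log n ! - log k ! - log (n - k)! := by
    have h := congrArg (fun m : ℕ => log m) (Nat.choose_mul_factorial_mul_factorial hk)
    have hc : ((n.choose k : ℕ) : ℝ) ≠ 0 := Nat.cast_ne_zero.2 (Nat.choose_pos hk).ne'
    simp only [Nat.cast_mul] at h
    rw [log_mul (mul_ne_zero hc (by positivity)) (by positivity), log_mul hc (by positivity)] at h
    linarith
  have hsub : (k : ℝ) + (n - k : ℕ) = n := by rw [← Nat.cast_add, Nat.add_sub_cancel' hk]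
  have hentropy :
      n * binEntropy (k / n) = n * log n - k * log k - (n - k : ℕ) * log (n - k : ℕ) := by
    simpa only [hsub] using add_mul_binEntropy_div_add (k : ℝ) (n - k : ℕ)
  have hk_le := log_natCast_le_log_natCast hk
  have hnk_le := log_natCast_le_log_natCast (Nat.sub_le n k)
  have hn := log_natCast_nonneg n
  rw [hchoose, hentropy, abs_le]
  constructor
  · linarith [mul_log_sub_le_log_factorial n, log_factorial_le k, log_factorial_le (n - k)]
  · linarith [log_factorial_le n, mul_log_sub_le_log_factorial k,
      mul_log_sub_le_log_factorial (n - k)]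

theorem log_sum_le_log_card_add {ι : Type*} {s : Finset ι} {w : ι → ℝ} {B : ℝ}
    (hs : s.Nonempty) (hw : ∀ i ∈ s, 0 < w i) (hB : ∀ i ∈ s, log (w i) ≤ B) :
    log (∑ i ∈ s, w i) ≤ log #s + B := by
  have hsum : ∑ i ∈ s, w i ≤ #s * exp B := by
    simpa using sum_le_card_nsmul s w (exp B) fun i hi =>
      (log_le_iff_le_exp (hw i hi)).1 (hB i hi)
  calc log (∑ i ∈ s, w i) ≤ log (#s * exp B) := log_le_log (sum_pos hw hs) hsum
    _ = log #s + B := by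
      rw [log_mul (Nat.cast_ne_zero.2 hs.card_pos.ne') (exp_ne_zero B), log_exp]

theorem log_le_log_sum {ι : Type*} {s : Finset ι} {w : ι → ℝ} (hw : ∀ i ∈ s, 0 < w i) {j : ι}
    (hj : j ∈ s) : log (w j) ≤ log (∑ i ∈ s, w i) :=
  log_le_log (hw j hj) (single_le_sum (fun i hi => (hw i hi).le) hj)

noncomputable def finiteSizeError (N : ℕ) : ℝ := (4 * log (N + 1) + 4) / N

theorem tendsto_finiteSizeError : Tendsto finiteSizeError atTop (𝓝 0) := by
  have hlog : Tendsto (fun x : ℝ => log (x + 1) / x) atTop (𝓝 0) := by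
    refine ((tendsto_pow_log_div_mul_add_atTop 1 (-1) 1 one_ne_zero).comp
      (tendsto_atTop_add_const_right _ 1 tendsto_id)).congr fun x => ?_
    simp
  have := ((hlog.const_mul 4).add (tendsto_inv_atTop_zero.const_mul 4)).comp
    tendsto_natCast_atTop_atTop
  simp only [mul_zero, add_zero] at this
  exact this.congr fun N => by simp only [finiteSizeError, Function.comp_apply]; ring

section Configurations

def boolFunEquivFinset (ι : Type*) [Fintype ι] [DecidableEq ι] : (ι → Bool) ≃ Finset ι where
  toFun τ := {i | τ i = true}
  invFun s i := decide (i ∈ s)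
  left_inv τ := by ext i; simp
  right_inv s := by ext i; simp

theorem sum_boolFun_eq_sum_choose {M ι : Type*} [AddCommMonoid M] [Fintype ι] [DecidableEq ι]
    (f : ℕ → M) :
    ∑ τ : ι → Bool, f #{i | τ i = true} =
      ∑ k ∈ range (Fintype.card ι + 1), (Fintype.card ι).choose k • f k := by
  rw [← (boolFunEquivFinset ι).symm.sum_comp]
  simp only [boolFunEquivFinset, Equiv.coe_fn_symm_mk, decide_eq_true_eq, filter_mem_eq_inter,
    univ_inter]
  rw [← powerset_univ, sum_powerset_apply_card, card_univ]

theorem sum_spin_eq {ι : Type*} [Fintype ι] (τ : ι → Bool) :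
    ∑ i, spin (τ i) = 2 * #{i | τ i = true} - Fintype.card ι := by
  have hspin (b : Bool) : spin b = 2 * (if b = true then 1 else 0) - 1 := by
    cases b <;> norm_num [spin]
  simp_rw [hspin, sum_sub_distrib, ← mul_sum, sum_boole]
  simp

theorem sum_boolFun_spin (n : ℕ) (g : ℝ → ℝ) :
    ∑ τ : Fin n → Bool, g (∑ i, spin (τ i)) =
      ∑ k ∈ range (n + 1), n.choose k * g (2 * k - n) := by
  simp_rw [sum_spin_eq, sum_boolFun_eq_sum_choose fun k : ℕ => g (2 * k - Fintype.card (Fin n)),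
    Fintype.card_fin, nsmul_eq_mul]

variable (N₁ N₂ : ℕ)

noncomputable def magnetizationA (σ : Fin (N₁ + N₂) → Bool) : ℝ :=
  ∑ i : Fin (N₁ + N₂), if (i : ℕ) < N₁ then spin (σ i) else 0

noncomputable def magnetizationB (σ : Fin (N₁ + N₂) → Bool) : ℝ :=
  ∑ i : Fin (N₁ + N₂), if N₁ ≤ (i : ℕ) then spin (σ i) else 0

theorem magnetizationA_append (τ₁ : Fin N₁ → Bool) (τ₂ : Fin N₂ → Bool) :
    magnetizationA N₁ N₂ (Fin.append τ₁ τ₂) = ∑ i, spin (τ₁ i) := by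
  simp [magnetizationA, Fin.sum_univ_add]

theorem magnetizationB_append (τ₁ : Fin N₁ → Bool) (τ₂ : Fin N₂ → Bool) :
    magnetizationB N₁ N₂ (Fin.append τ₁ τ₂) = ∑ i, spin (τ₂ i) := by
  simp [magnetizationB, Fin.sum_univ_add,
    sum_eq_zero fun (i : Fin N₁) _ => if_neg (not_le.2 i.isLt)]

theorem sum_configurations_eq_sum_choose (F : ℝ → ℝ → ℝ) :
    ∑ σ : Fin (N₁ + N₂) → Bool, F (magnetizationA N₁ N₂ σ) (magnetizationB N₁ N₂ σ) =
      ∑ k₁ ∈ range (N₁ + 1), ∑ k₂ ∈ range (N₂ + 1),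
        N₁.choose k₁ * N₂.choose k₂ * F (2 * k₁ - N₁) (2 * k₂ - N₂) := by
  rw [← (Fin.appendEquiv N₁ N₂).sum_comp, Fintype.sum_prod_type]
  simp only [Fin.appendEquiv, Equiv.coe_fn_mk, magnetizationA_append, magnetizationB_append]
  calc ∑ τ₁ : Fin N₁ → Bool, ∑ τ₂ : Fin N₂ → Bool, F (∑ i, spin (τ₁ i)) (∑ i, spin (τ₂ i))
      = ∑ k₂ ∈ range (N₂ + 1), N₂.choose k₂ *
          ∑ τ₁ : Fin N₁ → Bool, F (∑ i, spin (τ₁ i)) (2 * k₂ - N₂) := by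
        simp_rw [sum_boolFun_spin N₂ (F _), mul_sum]
        exact sum_comm
    _ = ∑ k₂ ∈ range (N₂ + 1), ∑ k₁ ∈ range (N₁ + 1),
          N₁.choose k₁ * N₂.choose k₂ * F (2 * k₁ - N₁) (2 * k₂ - N₂) := by
        refine sum_congr rfl fun k₂ _ => ?_
        rw [sum_boolFun_spin N₁ (fun s => F s (2 * k₂ - N₂)), mul_sum]
        exact sum_congr rfl fun k₁ _ => by ring
    _ = _ := sum_comm

end Configurations

section Pressure

variable (J11 J12 J22 h1 h2 : ℝ)

noncomputable def meanFieldEnergy (m₁ m₂ : ℝ) : ℝ :=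
  (J11 * m₁ ^ 2 + 2 * J12 * m₁ * m₂ + J22 * m₂ ^ 2) / 2 + h1 * m₁ + h2 * m₂

/-- The Boltzmann weight of all configurations with `k.1` up spins in block `A` and `k.2` up
spins in block `B`. -/
noncomputable def macrostateWeight (N₁ N₂ : ℕ) (k : ℕ × ℕ) : ℝ :=
  N₁.choose k.1 * N₂.choose k.2 * exp ((N₁ + N₂ : ℕ) * meanFieldEnergy J11 J12 J22 h1 h2
    ((2 * k.1 - N₁) / (N₁ + N₂ : ℕ)) ((2 * k.2 - N₂) / (N₁ + N₂ : ℕ)))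

noncomputable def pressureFunctional (a : ℝ) (x : ℝ × ℝ) : ℝ :=
  a * binEntropy x.1 + (1 - a) * binEntropy x.2 +
    meanFieldEnergy J11 J12 J22 h1 h2 (a * (2 * x.1 - 1)) ((1 - a) * (2 * x.2 - 1))

noncomputable def variationalPressure (a : ℝ) : ℝ :=
  sSup (pressureFunctional J11 J12 J22 h1 h2 a '' unitInterval ×ˢ unitInterval)

variable {J11 J12 J22 h1 h2}

theorem neg_ham_eq {N₁ N₂ : ℕ} (hN : N₁ + N₂ ≠ 0) (σ : Fin (N₁ + N₂) → Bool) :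
    -ham J11 J12 J22 h1 h2 N₁ N₂ σ = (N₁ + N₂ : ℕ) * meanFieldEnergy J11 J12 J22 h1 h2
      (magnetizationA N₁ N₂ σ / (N₁ + N₂ : ℕ)) (magnetizationB N₁ N₂ σ / (N₁ + N₂ : ℕ)) := by
  have hN' : ((N₁ + N₂ : ℕ) : ℝ) ≠ 0 := Nat.cast_ne_zero.2 hN
  simp only [ham, ← ite_zero_mul_ite_zero, ← sum_mul_sum]
  rw [meanFieldEnergy, magnetizationA, magnetizationB]
  field_simp
  ring

theorem partitionFunction_eq {N₁ N₂ : ℕ} (hN : N₁ + N₂ ≠ 0) :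
    ∑ σ, exp (-ham J11 J12 J22 h1 h2 N₁ N₂ σ) =
      ∑ k ∈ range (N₁ + 1) ×ˢ range (N₂ + 1), macrostateWeight J11 J12 J22 h1 h2 N₁ N₂ k := by
  simp_rw [neg_ham_eq hN, sum_product, macrostateWeight]
  exact sum_configurations_eq_sum_choose N₁ N₂ fun s t => exp ((N₁ + N₂ : ℕ) *
    meanFieldEnergy J11 J12 J22 h1 h2 (s / (N₁ + N₂ : ℕ)) (t / (N₁ + N₂ : ℕ)))

theorem macrostateWeight_pos {N₁ N₂ : ℕ} {k : ℕ × ℕ}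
    (hk : k ∈ range (N₁ + 1) ×ˢ range (N₂ + 1)) :
    0 < macrostateWeight J11 J12 J22 h1 h2 N₁ N₂ k := by
  obtain ⟨hk₁, hk₂⟩ := mem_product.1 hk
  have := Nat.choose_pos (mem_range_succ_iff.1 hk₁)
  have := Nat.choose_pos (mem_range_succ_iff.1 hk₂)
  unfold macrostateWeight
  positivity

theorem continuous_pressureFunctional : Continuous ↿(pressureFunctional J11 J12 J22 h1 h2) := by
  unfold pressureFunctional meanFieldEnergy
  fun_prop

theorem continuous_variationalPressure : Continuous (variationalPressure J11 J12 J22 h1 h2) :=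
  (isCompact_Icc.prod isCompact_Icc).continuous_sSup continuous_pressureFunctional

variable (J11 J12 J22 h1 h2) in
theorem pressureFunctional_le_variationalPressure (a : ℝ) {x : ℝ × ℝ}
    (hx : x ∈ unitInterval ×ˢ unitInterval) :
    pressureFunctional J11 J12 J22 h1 h2 a x ≤ variationalPressure J11 J12 J22 h1 h2 a :=
  le_csSup ((isCompact_Icc.prod isCompact_Icc).bddAbove_image
    (continuous_pressureFunctional.comp (Continuous.prodMk_right a)).continuousOn)
    (Set.mem_image_of_mem _ hx)

theorem natCast_div_mul_two_mul_div_sub_one {k n : ℕ} (hk : k ≤ n) (c : ℝ) :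
    n / c * (2 * (k / n) - 1) = (2 * k - n) / c := by
  rcases n.eq_zero_or_pos with rfl | hn
  · simp [Nat.le_zero.1 hk]
  · field_simp

theorem mul_pressureFunctional_eq {N₁ N₂ k₁ k₂ : ℕ} (hN : N₁ + N₂ ≠ 0)
    (hk₁ : k₁ ≤ N₁) (hk₂ : k₂ ≤ N₂) :
    (N₁ + N₂ : ℕ) * pressureFunctional J11 J12 J22 h1 h2 (N₁ / (N₁ + N₂ : ℕ)) (k₁ / N₁, k₂ / N₂) =
      N₁ * binEntropy (k₁ / N₁) + N₂ * binEntropy (k₂ / N₂) +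
        (N₁ + N₂ : ℕ) * meanFieldEnergy J11 J12 J22 h1 h2
          ((2 * k₁ - N₁) / (N₁ + N₂ : ℕ)) ((2 * k₂ - N₂) / (N₁ + N₂ : ℕ)) := by
  have hN' : ((N₁ + N₂ : ℕ) : ℝ) ≠ 0 := Nat.cast_ne_zero.2 hN
  have hcompl : 1 - N₁ / ((N₁ + N₂ : ℕ) : ℝ) = N₂ / (N₁ + N₂ : ℕ) := by
    field_simp; push_cast; ring
  rw [pressureFunctional, hcompl, natCast_div_mul_two_mul_div_sub_one hk₁,
    natCast_div_mul_two_mul_div_sub_one hk₂]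
  field_simp

variable (J11 J12 J22 h1 h2) in
theorem abs_log_macrostateWeight_sub_le {N₁ N₂ k₁ k₂ : ℕ} (hN : N₁ + N₂ ≠ 0)
    (hk₁ : k₁ ≤ N₁) (hk₂ : k₂ ≤ N₂) :
    |log (macrostateWeight J11 J12 J22 h1 h2 N₁ N₂ (k₁, k₂)) -
      (N₁ + N₂ : ℕ) * pressureFunctional J11 J12 J22 h1 h2 (N₁ / (N₁ + N₂ : ℕ)) (k₁ / N₁, k₂ / N₂)|
      ≤ 2 * log (N₁ + N₂ : ℕ) + 4 := by
  have hc₁ : ((N₁.choose k₁ : ℕ) : ℝ) ≠ 0 := Nat.cast_ne_zero.2 (Nat.choose_pos hk₁).ne'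
  have hc₂ : ((N₂.choose k₂ : ℕ) : ℝ) ≠ 0 := Nat.cast_ne_zero.2 (Nat.choose_pos hk₂).ne'
  rw [macrostateWeight, mul_pressureFunctional_eq hN hk₁ hk₂,
    log_mul (mul_ne_zero hc₁ hc₂) (exp_ne_zero _), log_mul hc₁ hc₂, log_exp]
  have h₁ := abs_le.1 (abs_log_choose_sub_mul_binEntropy_le hk₁)
  have h₂ := abs_le.1 (abs_log_choose_sub_mul_binEntropy_le hk₂)
  have hN₁ := log_natCast_le_log_natCast (Nat.le_add_right N₁ N₂)
  have hN₂ := log_natCast_le_log_natCast (Nat.le_add_left N₂ N₁)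
  rw [abs_le]
  constructor <;> linarith

theorem pressure_le {N₁ N₂ : ℕ} (hN : N₁ + N₂ ≠ 0) :
    pressure J11 J12 J22 h1 h2 N₁ N₂ ≤
      variationalPressure J11 J12 J22 h1 h2 (N₁ / (N₁ + N₂ : ℕ)) + finiteSizeError (N₁ + N₂) := by
  set N : ℝ := ((N₁ + N₂ : ℕ) : ℝ)
  have hNpos : 0 < N := by positivity
  set Φ := variationalPressure J11 J12 J22 h1 h2 (N₁ / N)
  have hlogZ : log (∑ σ, exp (-ham J11 J12 J22 h1 h2 N₁ N₂ σ)) ≤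
      log ((N₁ + 1 : ℕ) * (N₂ + 1 : ℕ)) + (N * Φ + 2 * log N + 4) := by
    have hcard : #(range (N₁ + 1) ×ˢ range (N₂ + 1)) = (N₁ + 1) * (N₂ + 1) := by simp
    rw [partitionFunction_eq hN, ← Nat.cast_mul, ← hcard]
    refine log_sum_le_log_card_add ⟨(0, 0), by simp⟩ (fun k hk => macrostateWeight_pos hk)
      fun k hk => ?_
    obtain ⟨hk₁, hk₂⟩ := mem_product.1 hk
    replace hk₁ := mem_range_succ_iff.1 hk₁
    replace hk₂ := mem_range_succ_iff.1 hk₂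
    have hweight := (abs_le.1 (abs_log_macrostateWeight_sub_le J11 J12 J22 h1 h2 hN hk₁ hk₂)).2
    have hΦ := pressureFunctional_le_variationalPressure J11 J12 J22 h1 h2 (N₁ / N)
      (Set.mk_mem_prod
        (unitInterval.div_mem k.1.cast_nonneg N₁.cast_nonneg (by exact_mod_cast hk₁))
        (unitInterval.div_mem k.2.cast_nonneg N₂.cast_nonneg (by exact_mod_cast hk₂)))
    linarith [mul_le_mul_of_nonneg_left hΦ hNpos.le]
  have hcount : log ((N₁ + 1 : ℕ) * (N₂ + 1 : ℕ)) ≤ 2 * log (N + 1) := by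
    have hNcast : N = N₁ + N₂ := Nat.cast_add N₁ N₂
    rw [log_mul (by positivity) (by positivity), two_mul]
    gcongr <;> push_cast <;> linarith [N₁.cast_nonneg (α := ℝ), N₂.cast_nonneg (α := ℝ)]
  have hlogN : log N ≤ log (N + 1) := log_le_log hNpos (by linarith)
  rw [pressure, finiteSizeError, one_div_mul_eq_div, div_le_iff₀ hNpos, add_mul,
    div_mul_cancel₀ _ hNpos.ne']
  linarith

theorem le_pressure {N₁ N₂ k₁ k₂ : ℕ} (hN : N₁ + N₂ ≠ 0) (hk₁ : k₁ ≤ N₁) (hk₂ : k₂ ≤ N₂) :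
    pressureFunctional J11 J12 J22 h1 h2 (N₁ / (N₁ + N₂ : ℕ)) (k₁ / N₁, k₂ / N₂) -
      finiteSizeError (N₁ + N₂) ≤ pressure J11 J12 J22 h1 h2 N₁ N₂ := by
  set N : ℝ := ((N₁ + N₂ : ℕ) : ℝ)
  have hNpos : 0 < N := by positivity
  have hlogZ : N * pressureFunctional J11 J12 J22 h1 h2 (N₁ / N) (k₁ / N₁, k₂ / N₂) -
      2 * log N - 4 ≤ log (∑ σ, exp (-ham J11 J12 J22 h1 h2 N₁ N₂ σ)) := by
    have hweight := (abs_le.1 (abs_log_macrostateWeight_sub_le J11 J12 J22 h1 h2 hN hk₁ hk₂)).1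
    rw [partitionFunction_eq hN]
    calc _ ≤ log (macrostateWeight J11 J12 J22 h1 h2 N₁ N₂ (k₁, k₂)) := by linarith
      _ ≤ _ := log_le_log_sum (fun k hk => macrostateWeight_pos hk)
        (mem_product.2 ⟨mem_range_succ_iff.2 hk₁, mem_range_succ_iff.2 hk₂⟩)
  have hlogN : log N ≤ log (N + 1) := log_le_log hNpos (by linarith)
  have hlogN₀ : 0 ≤ log N := log_natCast_nonneg _
  rw [pressure, finiteSizeError, one_div_mul_eq_div, le_div_iff₀ hNpos, sub_mul,
    div_mul_cancel₀ _ hNpos.ne']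
  linarith

theorem tendsto_pressure {N₁ N₂ : ℕ → ℕ} {α : ℝ} (hN₁ : Tendsto N₁ atTop atTop)
    (hN₂ : Tendsto N₂ atTop atTop)
    (hα : Tendsto (fun n => (N₁ n : ℝ) / (N₁ n + N₂ n : ℕ)) atTop (𝓝 α)) :
    Tendsto (fun n => pressure J11 J12 J22 h1 h2 (N₁ n) (N₂ n)) atTop
      (𝓝 (variationalPressure J11 J12 J22 h1 h2 α)) := by
  obtain ⟨q, hq, hq_max⟩ : ∃ q ∈ unitInterval ×ˢ unitInterval,
      variationalPressure J11 J12 J22 h1 h2 α = pressureFunctional J11 J12 J22 h1 h2 α q :=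
    (isCompact_Icc.prod isCompact_Icc).exists_sSup_image_eq
      ⟨0, unitInterval.zero_mem, unitInterval.zero_mem⟩
      (continuous_pressureFunctional.comp (Continuous.prodMk_right α)).continuousOn
  have herr := tendsto_finiteSizeError.comp
    (tendsto_atTop_mono (fun n => Nat.le_add_right _ (N₂ n)) hN₁)
  have hgrid {c : ℝ} (hc : 0 ≤ c) {M : ℕ → ℕ} (hM : Tendsto M atTop atTop) :
      Tendsto (fun n => (⌊c * M n⌋₊ : ℝ) / M n) atTop (𝓝 c) :=
    (tendsto_nat_floor_mul_div_atTop hc).comp (tendsto_natCast_atTop_atTop.comp hM)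
  have hlower : Tendsto (fun n =>
      pressureFunctional J11 J12 J22 h1 h2 (N₁ n / (N₁ n + N₂ n : ℕ))
        (⌊q.1 * N₁ n⌋₊ / N₁ n, ⌊q.2 * N₂ n⌋₊ / N₂ n) - finiteSizeError (N₁ n + N₂ n))
      atTop (𝓝 (variationalPressure J11 J12 J22 h1 h2 α)) := by
    rw [hq_max, ← sub_zero (pressureFunctional J11 J12 J22 h1 h2 α q)]
    exact ((continuous_pressureFunctional.tendsto (α, q)).comp
      (hα.prodMk_nhds ((hgrid hq.1.1 hN₁).prodMk_nhds (hgrid hq.2.1 hN₂)))).sub herr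
  have hupper : Tendsto (fun n =>
      variationalPressure J11 J12 J22 h1 h2 (N₁ n / (N₁ n + N₂ n : ℕ)) +
        finiteSizeError (N₁ n + N₂ n))
      atTop (𝓝 (variationalPressure J11 J12 J22 h1 h2 α)) := by
    simpa using ((continuous_variationalPressure.tendsto α).comp hα).add herr
  have hpos : ∀ᶠ n in atTop, N₁ n + N₂ n ≠ 0 :=
    (hN₁.eventually_gt_atTop 0).mono fun n hn => by omega
  refine tendsto_of_tendsto_of_tendsto_of_le_of_le' hlower hupper ?_ ?_
  · filter_upwards [hpos] with n hn
    exact le_pressure hn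
      (Nat.floor_le_of_le (mul_le_of_le_one_left (Nat.cast_nonneg _) hq.1.2))
      (Nat.floor_le_of_le (mul_le_of_le_one_left (Nat.cast_nonneg _) hq.2.2))
  · filter_upwards [hpos] with n hn
    exact pressure_le hn

end Pressure

end BipartiteMeanField

theorem pressure_thermodynamic_limit_exists_general
    (J11 J12 J22 h1 h2 α : ℝ)
    (hα : α ∈ Set.Ioo (0 : ℝ) 1) :
    ∃ p : ℝ, Filter.Tendsto
      (fun N : ℕ =>
        pressure J11 J12 J22 h1 h2 ⌊α * (N : ℝ)⌋₊ (N - ⌊α * (N : ℝ)⌋₊))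
      Filter.atTop (nhds p) := by
  obtain ⟨hα₀, hα₁⟩ := hα
  have hfloor_le (N : ℕ) : ⌊α * N⌋₊ ≤ N :=
    Nat.floor_le_of_le (mul_le_of_le_one_left N.cast_nonneg hα₁.le)
  have hN₁ : Tendsto (fun N : ℕ => ⌊α * N⌋₊) atTop atTop :=
    tendsto_nat_floor_atTop.comp (tendsto_natCast_atTop_atTop.const_mul_atTop hα₀)
  have hN₂ : Tendsto (fun N : ℕ => N - ⌊α * N⌋₊) atTop atTop := by
    refine tendsto_natCast_atTop_iff.1 (tendsto_atTop_mono (fun N => ?_)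
      (tendsto_natCast_atTop_atTop.const_mul_atTop (sub_pos.2 hα₁)))
    rw [Nat.cast_sub (hfloor_le N)]
    linarith [Nat.floor_le (mul_nonneg hα₀.le N.cast_nonneg)]
  have hratio : Tendsto (fun N : ℕ => (⌊α * N⌋₊ : ℝ) / (⌊α * N⌋₊ + (N - ⌊α * N⌋₊) : ℕ))
      atTop (𝓝 α) := by
    simp_rw [Nat.add_sub_cancel' (hfloor_le _)]
    exact (tendsto_nat_floor_mul_div_atTop hα₀.le).comp tendsto_natCast_atTop_atTop
  exact ⟨_, BipartiteMeanField.tendsto_pressure hN₁ hN₂ hratio⟩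

/-- the thermodynamic limit of the pressure exists. -/
theorem pressure_thermodynamic_limit_exists
    (J11 J12 J22 h1 h2 α : ℝ) (hJ11 : 0 < J11) (hJ22 : 0 < J22)
    (hα : α ∈ Set.Ioo (0 : ℝ) 1) :
    ∃ p : ℝ, Filter.Tendsto
      (fun N : ℕ =>
        pressure J11 J12 J22 h1 h2 ⌊α * (N : ℝ)⌋₊ (N - ⌊α * (N : ℝ)⌋₊))
      Filter.atTop (nhds p) :=
  pressure_thermodynamic_limit_exists_general J11 J12 J22 h1 h2 α hα
end

section
/- Upper bound for the pressure: limsup_{N→∞} p_N ≤ sup_{(μ1,μ2) ∈ [−1,1]²} p_UP(μ1, μ2). -/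
open Real Filter

/-- The upper-bound variational functional `p_UP`. -/
noncomputable def pUP (J11 J12 J22 h1 h2 α μ1 μ2 : ℝ) : ℝ :=
  Real.log 2
    - (1 / 2) * (J11 * α ^ 2 * μ1 ^ 2 + 2 * J12 * α * (1 - α) * μ1 * μ2
        + J22 * (1 - α) ^ 2 * μ2 ^ 2)
    + α * Real.log (Real.cosh (J11 * α * μ1 + J12 * (1 - α) * μ2 + h1))
    + (1 - α) * Real.log (Real.cosh (J12 * α * μ1 + J22 * (1 - α) * μ2 + h2))

/-!
On configurations whose block magnetisations per site are `μ = (μ1, μ2)`, the quadratic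
Hamiltonian coincides with its linearisation at `μ`, a sum of independent single-site terms whose
partition function is exactly `exp (N * pUP (N1 / N) μ1 μ2)`. Every configuration lies in one of
at most `(N + 1) ^ 2` such fibres, so `Z_N ≤ (N + 1) ^ 2 * exp (N * sup_μ pUP (N1 / N) μ)`. The
polynomial factor is invisible after taking `log / N`, and `a ↦ sup_μ pUP a μ` is continuous,
while `N1 / N → α`.
-/

open Finset Topology

section Spin

variable {ι : Type*}

lemma spin_eq_two_mul_sub_one (b : Bool) : spin b = 2 * (if b then 1 else 0) - 1 := by
  cases b <;> norm_num [spin]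

lemma sum_spin_eq_two_mul_card_sub (s : Finset ι) (σ : ι → Bool) :
    ∑ i ∈ s, spin (σ i) = 2 * #{i ∈ s | σ i} - #s := by
  simp_rw [spin_eq_two_mul_sub_one, Finset.sum_sub_distrib, ← Finset.mul_sum, Finset.sum_boole]
  simp

lemma sum_exp_sum_mul_spin [Fintype ι] [DecidableEq ι] (f : ι → ℝ) :
    ∑ σ : ι → Bool, exp (∑ i, f i * spin (σ i)) = ∏ i, 2 * cosh (f i) := by
  simp_rw [Real.exp_sum]
  rw [← Fintype.prod_sum fun i b => exp (f i * spin b)]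
  congr with i
  simp [spin, Real.cosh_eq]
  ring

end Spin

lemma sum_le_card_mul_of_forall_exists_le {ι κ : Type*} {s : Finset ι} {V : Finset κ}
    {f : ι → ℝ} {g : κ → ι → ℝ} {B : ℝ} (hg : ∀ v ∈ V, ∀ i ∈ s, 0 ≤ g v i)
    (hf : ∀ i ∈ s, ∃ v ∈ V, f i ≤ g v i) (hB : ∀ v ∈ V, ∑ i ∈ s, g v i ≤ B) :
    ∑ i ∈ s, f i ≤ #V * B :=
  calc ∑ i ∈ s, f i ≤ ∑ i ∈ s, ∑ v ∈ V, g v i := Finset.sum_le_sum fun i hi => by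
        obtain ⟨v, hv, hfv⟩ := hf i hi
        exact hfv.trans (Finset.single_le_sum (fun w hw => hg w hw i hi) hv)
    _ = ∑ v ∈ V, ∑ i ∈ s, g v i := Finset.sum_comm
    _ ≤ #V * B := by simpa using Finset.sum_le_sum hB

lemma sum_sum_ite_and_mul {ι : Type*} (s : Finset ι) (p q : ι → Prop) [DecidablePred p]
    [DecidablePred q] (f : ι → ℝ) :
    ∑ i ∈ s, ∑ j ∈ s, (if p i ∧ q j then f i * f j else 0)
      = (∑ i ∈ s, if p i then f i else 0) * ∑ j ∈ s, if q j then f j else 0 := by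
  simp_rw [Finset.sum_mul_sum, ite_zero_mul_ite_zero]

lemma abs_div_le_one_of_abs_le {x N : ℝ} (h : |x| ≤ N) : |x / N| ≤ 1 := by
  rw [abs_div]
  exact div_le_one_of_le₀ (h.trans (le_abs_self N)) (abs_nonneg N)

lemma abs_two_mul_sub_le {k N : ℕ} (hk : k ≤ N) : |(2 * k - N : ℝ)| ≤ N := by
  have : (k : ℝ) ≤ N := by exact_mod_cast hk
  rw [abs_le]
  constructor <;> linarith [k.cast_nonneg (α := ℝ)]

lemma neg_abs_le_mul_of_abs_le_one {c x : ℝ} (hx : |x| ≤ 1) : -|c| ≤ c * x := by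
  have : |c * x| ≤ |c| := by
    rw [abs_mul]; exact mul_le_of_le_one_right (abs_nonneg c) hx
  linarith [neg_abs_le (c * x)]

lemma two_mul_cosh_pow (x : ℝ) (N : ℕ) : (2 * cosh x) ^ N = exp (N * (log 2 + log (cosh x))) := by
  rw [← Real.log_mul two_ne_zero (cosh_pos x).ne', Real.exp_nat_mul,
    Real.exp_log (by positivity)]

lemma tendsto_log_add_one_div_atTop :
    Tendsto (fun N : ℕ => log (N + 1) / N) atTop (𝓝 0) := by
  have := (Real.tendsto_pow_log_div_mul_add_atTop 1 (-1) 1 one_ne_zero).comp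
    (tendsto_natCast_atTop_atTop.atTop_add (tendsto_const_nhds (x := (1 : ℝ))))
  refine this.congr fun N => ?_
  simp

lemma eventually_floor_mul_pos_and_lt {α : ℝ} (hα0 : 0 < α) (hα1 : α < 1) :
    ∀ᶠ N : ℕ in atTop, 0 < ⌊α * N⌋₊ ∧ ⌊α * N⌋₊ < N := by
  filter_upwards [(tendsto_nat_floor_mul_atTop α hα0).eventually_gt_atTop 0,
    eventually_gt_atTop 0] with N hN1 hN
  exact ⟨hN1, (Nat.floor_lt (by positivity)).2 (mul_lt_of_lt_one_left (by exact_mod_cast hN) hα1)⟩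

section Bipartite

variable (N1 N2 : ℕ)

noncomputable def magA (σ : Fin (N1 + N2) → Bool) : ℝ :=
  ∑ i : Fin (N1 + N2), if (i : ℕ) < N1 then spin (σ i) else 0

noncomputable def magB (σ : Fin (N1 + N2) → Bool) : ℝ :=
  ∑ i : Fin (N1 + N2), if N1 ≤ (i : ℕ) then spin (σ i) else 0

lemma card_filter_val_lt_left : #{i : Fin (N1 + N2) | (i : ℕ) < N1} = N1 := by
  simp [Fin.card_filter_val_lt]

lemma card_filter_left_le_val : #{i : Fin (N1 + N2) | N1 ≤ (i : ℕ)} = N2 := by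
  have h := Finset.card_filter_add_card_filter_not (s := (univ : Finset (Fin (N1 + N2))))
    (fun i => (i : ℕ) < N1)
  simp only [card_filter_val_lt_left, not_lt, card_univ, Fintype.card_fin] at h
  omega

variable {N1 N2}

lemma magA_eq (σ : Fin (N1 + N2) → Bool) :
    magA N1 N2 σ = 2 * #{i : Fin (N1 + N2) | (i : ℕ) < N1 ∧ σ i} - N1 := by
  rw [magA, ← Finset.sum_filter, sum_spin_eq_two_mul_card_sub, Finset.filter_filter,
    card_filter_val_lt_left]

lemma magB_eq (σ : Fin (N1 + N2) → Bool) :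
    magB N1 N2 σ = 2 * #{i : Fin (N1 + N2) | N1 ≤ (i : ℕ) ∧ σ i} - N2 := by
  rw [magB, ← Finset.sum_filter, sum_spin_eq_two_mul_card_sub, Finset.filter_filter,
    card_filter_left_le_val]

lemma card_filter_val_lt_and_le (σ : Fin (N1 + N2) → Bool) :
    #{i : Fin (N1 + N2) | (i : ℕ) < N1 ∧ σ i} ≤ N1 := by
  rw [← Finset.filter_filter]
  exact (card_filter_le _ _).trans_eq (card_filter_val_lt_left N1 N2)

lemma card_filter_le_val_and_le (σ : Fin (N1 + N2) → Bool) :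
    #{i : Fin (N1 + N2) | N1 ≤ (i : ℕ) ∧ σ i} ≤ N2 := by
  rw [← Finset.filter_filter]
  exact (card_filter_le _ _).trans_eq (card_filter_left_le_val N1 N2)

lemma neg_ham_eq (J11 J12 J22 h1 h2 : ℝ) (σ : Fin (N1 + N2) → Bool) :
    -ham J11 J12 J22 h1 h2 N1 N2 σ =
      (J11 * magA N1 N2 σ ^ 2 + 2 * J12 * magA N1 N2 σ * magB N1 N2 σ
          + J22 * magB N1 N2 σ ^ 2) / (2 * (N1 + N2))
        + h1 * magA N1 N2 σ + h2 * magB N1 N2 σ := by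
  rw [ham, sum_sum_ite_and_mul, sum_sum_ite_and_mul, sum_sum_ite_and_mul, magA, magB]
  push_cast
  ring

lemma sum_exp_mul_magA_add_mul_magB (a b : ℝ) :
    ∑ σ : Fin (N1 + N2) → Bool, exp (a * magA N1 N2 σ + b * magB N1 N2 σ)
      = (2 * cosh a) ^ N1 * (2 * cosh b) ^ N2 := by
  have hsplit : ∀ σ : Fin (N1 + N2) → Bool, a * magA N1 N2 σ + b * magB N1 N2 σ
      = ∑ i : Fin (N1 + N2), (if (i : ℕ) < N1 then a else b) * spin (σ i) := fun σ => by
    simp_rw [magA, magB, Finset.mul_sum, ← Finset.sum_add_distrib]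
    refine Finset.sum_congr rfl fun i _ => ?_
    split_ifs <;> first | omega | ring
  simp_rw [hsplit, sum_exp_sum_mul_spin, apply_ite cosh, mul_ite, Finset.prod_ite,
    Finset.prod_const, card_filter_val_lt_left]
  simp only [not_lt, card_filter_left_le_val]

end Bipartite

/-- Minus the Hamiltonian linearised at trial magnetisations per site `μ1`, `μ2`; the parameter
`α` stands for the fraction `N1 / (N1 + N2)` of sites in block `A`. -/
noncomputable def meanFieldExponent (J11 J12 J22 h1 h2 α μ1 μ2 : ℝ) (N1 N2 : ℕ)
    (σ : Fin (N1 + N2) → Bool) : ℝ :=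
  (J11 * α * μ1 + J12 * (1 - α) * μ2 + h1) * magA N1 N2 σ
    + (J12 * α * μ1 + J22 * (1 - α) * μ2 + h2) * magB N1 N2 σ
    - (N1 + N2) * ((1 / 2) * (J11 * α ^ 2 * μ1 ^ 2 + 2 * J12 * α * (1 - α) * μ1 * μ2
        + J22 * (1 - α) ^ 2 * μ2 ^ 2))

section MeanField

variable {J11 J12 J22 h1 h2 α μ1 μ2 : ℝ} {N1 N2 : ℕ}

lemma sum_exp_meanFieldExponent (hα : (N1 : ℝ) = α * (N1 + N2)) :
    ∑ σ : Fin (N1 + N2) → Bool, exp (meanFieldExponent J11 J12 J22 h1 h2 α μ1 μ2 N1 N2 σ)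
      = exp ((N1 + N2) * pUP J11 J12 J22 h1 h2 α μ1 μ2) := by
  simp_rw [meanFieldExponent, Real.exp_sub]
  rw [← Finset.sum_div, sum_exp_mul_magA_add_mul_magB, two_mul_cosh_pow, two_mul_cosh_pow,
    ← Real.exp_add, ← Real.exp_sub]
  congr 1
  unfold pUP
  linear_combination (log (cosh (J11 * α * μ1 + J12 * (1 - α) * μ2 + h1))
    - log (cosh (J12 * α * μ1 + J22 * (1 - α) * μ2 + h2))) * hα

lemma neg_ham_eq_meanFieldExponent (hn : 0 < N1 + N2) (hα : (N1 : ℝ) = α * (N1 + N2))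
    {σ : Fin (N1 + N2) → Bool} (hμ1 : N1 * μ1 = magA N1 N2 σ) (hμ2 : N2 * μ2 = magB N1 N2 σ) :
    -ham J11 J12 J22 h1 h2 N1 N2 σ = meanFieldExponent J11 J12 J22 h1 h2 α μ1 μ2 N1 N2 σ := by
  have hN2 : (N2 : ℝ) = (1 - α) * (N1 + N2) := by linear_combination -hα
  have hn' : (N1 + N2 : ℝ) ≠ 0 := by exact_mod_cast hn.ne'
  rw [neg_ham_eq, meanFieldExponent, ← hμ1, ← hμ2]
  generalize hn_def : (N1 + N2 : ℝ) = n at *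
  rw [hα, hN2]
  field_simp
  ring

end MeanField

lemma continuous_pUP (J11 J12 J22 h1 h2 : ℝ) :
    Continuous fun p : ℝ × ℝ × ℝ => pUP J11 J12 J22 h1 h2 p.1 p.2.1 p.2.2 := by
  unfold pUP
  fun_prop (disch := exact fun _ => (Real.cosh_pos _).ne')

noncomputable def pUPSup (J11 J12 J22 h1 h2 α : ℝ) : ℝ :=
  sSup ((fun μ : ℝ × ℝ => pUP J11 J12 J22 h1 h2 α μ.1 μ.2) ''
    (Set.Icc (-1 : ℝ) 1 ×ˢ Set.Icc (-1 : ℝ) 1))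

section PUPSup

variable (J11 J12 J22 h1 h2 : ℝ)

lemma continuous_pUPSup : Continuous (pUPSup J11 J12 J22 h1 h2) :=
  (isCompact_Icc.prod isCompact_Icc).continuous_sSup (continuous_pUP J11 J12 J22 h1 h2)

lemma pUP_le_pUPSup {α μ1 μ2 : ℝ} (hμ1 : |μ1| ≤ 1) (hμ2 : |μ2| ≤ 1) :
    pUP J11 J12 J22 h1 h2 α μ1 μ2 ≤ pUPSup J11 J12 J22 h1 h2 α :=
  le_csSup (((isCompact_Icc.prod isCompact_Icc).image
      ((continuous_pUP J11 J12 J22 h1 h2).comp (continuous_const.prodMk continuous_id))).bddAbove)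
    ⟨(μ1, μ2), ⟨abs_le.1 hμ1, abs_le.1 hμ2⟩, rfl⟩

end PUPSup

section Pressure

variable (J11 J12 J22 h1 h2 : ℝ) {N1 N2 : ℕ}

lemma sum_exp_neg_ham_le (hN1 : 0 < N1) (hN2 : 0 < N2) :
    ∑ σ : Fin (N1 + N2) → Bool, exp (-ham J11 J12 J22 h1 h2 N1 N2 σ)
      ≤ ((N1 + N2 : ℕ) + 1) ^ 2
          * exp ((N1 + N2 : ℕ) * pUPSup J11 J12 J22 h1 h2 (N1 / (N1 + N2 : ℕ))) := by
  have hn : 0 < N1 + N2 := by omega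
  set α : ℝ := N1 / (N1 + N2 : ℕ)
  have hα : (N1 : ℝ) = α * (N1 + N2) := by push_cast [α]; field_simp
  let μ (k : ℕ × ℕ) : ℝ × ℝ := ((2 * k.1 - N1) / N1, (2 * k.2 - N2) / N2)
  have hcard : (#(range (N1 + 1) ×ˢ range (N2 + 1)) : ℝ) ≤ ((N1 + N2 : ℕ) + 1) ^ 2 := by
    rw [card_product, card_range, card_range]
    push_cast
    nlinarith [Nat.cast_nonneg (α := ℝ) N1, Nat.cast_nonneg (α := ℝ) N2]
  refine (sum_le_card_mul_of_forall_exists_le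
    (g := fun k σ => exp (meanFieldExponent J11 J12 J22 h1 h2 α (μ k).1 (μ k).2 N1 N2 σ))
    (fun _ _ _ _ => (exp_pos _).le) ?_ ?_).trans (by gcongr)
  · intro σ _
    refine ⟨(#{i : Fin (N1 + N2) | (i : ℕ) < N1 ∧ σ i},
        #{i : Fin (N1 + N2) | N1 ≤ (i : ℕ) ∧ σ i}),
      mem_product.2 ⟨mem_range_succ_iff.2 (card_filter_val_lt_and_le σ),
        mem_range_succ_iff.2 (card_filter_le_val_and_le σ)⟩, le_of_eq ?_⟩
    rw [neg_ham_eq_meanFieldExponent hn hα]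
    · rw [magA_eq]; exact mul_div_cancel₀ _ (by positivity)
    · rw [magB_eq]; exact mul_div_cancel₀ _ (by positivity)
  · intro k hk
    obtain ⟨hk1, hk2⟩ := mem_product.1 hk
    rw [sum_exp_meanFieldExponent hα]
    push_cast
    gcongr
    exact pUP_le_pUPSup J11 J12 J22 h1 h2
      (abs_div_le_one_of_abs_le (abs_two_mul_sub_le (mem_range_succ_iff.1 hk1)))
      (abs_div_le_one_of_abs_le (abs_two_mul_sub_le (mem_range_succ_iff.1 hk2)))

lemma pressure_le (hN1 : 0 < N1) (hN2 : 0 < N2) :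
    pressure J11 J12 J22 h1 h2 N1 N2
      ≤ 2 * log ((N1 + N2 : ℕ) + 1) / (N1 + N2 : ℕ)
          + pUPSup J11 J12 J22 h1 h2 (N1 / (N1 + N2 : ℕ)) := by
  have hn : (0 : ℝ) < (N1 + N2 : ℕ) := by positivity
  have hZ : 0 < ∑ σ : Fin (N1 + N2) → Bool, exp (-ham J11 J12 J22 h1 h2 N1 N2 σ) :=
    Finset.sum_pos (fun σ _ => exp_pos _) univ_nonempty
  have hlogZ := Real.log_le_log hZ (sum_exp_neg_ham_le J11 J12 J22 h1 h2 hN1 hN2)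
  rw [Real.log_mul (by positivity) (exp_pos _).ne', Real.log_exp, Real.log_pow,
    Nat.cast_ofNat] at hlogZ
  rw [pressure, one_div_mul_eq_div, div_le_iff₀ hn]
  exact hlogZ.trans_eq (by field_simp)

lemma neg_mul_le_neg_ham (hn : 0 < N1 + N2) (σ : Fin (N1 + N2) → Bool) :
    -(((|J11| + 2 * |J12| + |J22|) / 2 + |h1| + |h2|) * (N1 + N2))
      ≤ -ham J11 J12 J22 h1 h2 N1 N2 σ := by
  have hn' : (0 : ℝ) < N1 + N2 := by exact_mod_cast hn
  set x1 := magA N1 N2 σ / (N1 + N2)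
  set x2 := magB N1 N2 σ / (N1 + N2)
  have hx1 : |x1| ≤ 1 := abs_div_le_one_of_abs_le <| by
    rw [magA_eq]
    linarith [abs_two_mul_sub_le (card_filter_val_lt_and_le σ), Nat.cast_nonneg (α := ℝ) N2]
  have hx2 : |x2| ≤ 1 := abs_div_le_one_of_abs_le <| by
    rw [magB_eq]
    linarith [abs_two_mul_sub_le (card_filter_le_val_and_le σ), Nat.cast_nonneg (α := ℝ) N1]
  have hsq1 : |x1 ^ 2| ≤ 1 := by rw [abs_pow]; exact pow_le_one₀ (abs_nonneg _) hx1
  have hsq2 : |x2 ^ 2| ≤ 1 := by rw [abs_pow]; exact pow_le_one₀ (abs_nonneg _) hx2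
  have hprod : |x1 * x2| ≤ 1 := by rw [abs_mul]; exact mul_le_one₀ hx1 (abs_nonneg _) hx2
  have hrepr : -ham J11 J12 J22 h1 h2 N1 N2 σ = (N1 + N2)
      * ((J11 * x1 ^ 2 + 2 * J12 * (x1 * x2) + J22 * x2 ^ 2) / 2 + h1 * x1 + h2 * x2) := by
    rw [neg_ham_eq]; simp only [x1, x2]; field_simp
  have hlower : -((|J11| + 2 * |J12| + |J22|) / 2 + |h1| + |h2|)
      ≤ (J11 * x1 ^ 2 + 2 * J12 * (x1 * x2) + J22 * x2 ^ 2) / 2 + h1 * x1 + h2 * x2 := by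
    linarith [neg_abs_le_mul_of_abs_le_one (c := J11) hsq1,
      neg_abs_le_mul_of_abs_le_one (c := J12) hprod, neg_abs_le_mul_of_abs_le_one (c := J22) hsq2,
      neg_abs_le_mul_of_abs_le_one (c := h1) hx1, neg_abs_le_mul_of_abs_le_one (c := h2) hx2]
  rw [hrepr]
  linarith [mul_le_mul_of_nonneg_left hlower hn'.le]

lemma neg_le_pressure (hn : 0 < N1 + N2) :
    -((|J11| + 2 * |J12| + |J22|) / 2 + |h1| + |h2|) ≤ pressure J11 J12 J22 h1 h2 N1 N2 := by
  have hZ := (exp_le_exp.2 (neg_mul_le_neg_ham J11 J12 J22 h1 h2 hn fun _ => true)).trans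
    (Finset.single_le_sum (f := fun σ => exp (-ham J11 J12 J22 h1 h2 N1 N2 σ))
      (fun σ _ => (exp_pos _).le) (mem_univ _))
  have hlogZ := Real.log_le_log (exp_pos _) hZ
  rw [Real.log_exp] at hlogZ
  rw [pressure, one_div_mul_eq_div, Nat.cast_add, le_div_iff₀ (by exact_mod_cast hn)]
  linarith

end Pressure

theorem pressure_limsup_le_sup_pUP_general
    (J11 J12 J22 h1 h2 α : ℝ)
    (hα : α ∈ Set.Ioo (0 : ℝ) 1) :
    Filter.limsup
      (fun N : ℕ =>
        pressure J11 J12 J22 h1 h2 ⌊α * (N : ℝ)⌋₊ (N - ⌊α * (N : ℝ)⌋₊))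
      Filter.atTop ≤
      sSup ((fun μ : ℝ × ℝ => pUP J11 J12 J22 h1 h2 α μ.1 μ.2) ''
        (Set.Icc (-1 : ℝ) 1 ×ˢ Set.Icc (-1 : ℝ) 1)) := by
  obtain ⟨hα0, hα1⟩ := hα
  have hblocks := eventually_floor_mul_pos_and_lt hα0 hα1
  have hfrac : Tendsto (fun N : ℕ => (⌊α * N⌋₊ : ℝ) / N) atTop (𝓝 α) :=
    (tendsto_nat_floor_mul_div_atTop hα0.le).comp tendsto_natCast_atTop_atTop
  have hbound : Tendsto (fun N : ℕ => 2 * log (N + 1) / N + pUPSup J11 J12 J22 h1 h2 (⌊α * N⌋₊ / N))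
      atTop (𝓝 (pUPSup J11 J12 J22 h1 h2 α)) := by
    simpa [mul_div_assoc] using (tendsto_log_add_one_div_atTop.const_mul 2).add
      (((continuous_pUPSup J11 J12 J22 h1 h2).tendsto α).comp hfrac)
  have hle : ∀ᶠ N : ℕ in atTop, pressure J11 J12 J22 h1 h2 ⌊α * N⌋₊ (N - ⌊α * N⌋₊)
      ≤ 2 * log (N + 1) / N + pUPSup J11 J12 J22 h1 h2 (⌊α * N⌋₊ / N) := by
    filter_upwards [hblocks] with N ⟨hN1, hN2⟩
    simpa [Nat.add_sub_cancel' hN2.le] using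
      pressure_le J11 J12 J22 h1 h2 hN1 (Nat.sub_pos_of_lt hN2)
  have hge : ∀ᶠ N : ℕ in atTop, -((|J11| + 2 * |J12| + |J22|) / 2 + |h1| + |h2|)
      ≤ pressure J11 J12 J22 h1 h2 ⌊α * N⌋₊ (N - ⌊α * N⌋₊) := by
    filter_upwards [hblocks] with N hN
    exact neg_le_pressure J11 J12 J22 h1 h2 (by omega)
  exact (limsup_le_limsup hle (isCoboundedUnder_le_of_eventually_le _ hge)
    hbound.isBoundedUnder_le).trans_eq hbound.limsup_eq

/-- upper bound for the limiting pressure. -/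
theorem pressure_limsup_le_sup_pUP
    (J11 J12 J22 h1 h2 α : ℝ) (hJ11 : 0 < J11) (hJ22 : 0 < J22)
    (hα : α ∈ Set.Ioo (0 : ℝ) 1) :
    Filter.limsup
      (fun N : ℕ =>
        pressure J11 J12 J22 h1 h2 ⌊α * (N : ℝ)⌋₊ (N - ⌊α * (N : ℝ)⌋₊))
      Filter.atTop ≤
      sSup ((fun μ : ℝ × ℝ => pUP J11 J12 J22 h1 h2 α μ.1 μ.2) ''
        (Set.Icc (-1 : ℝ) 1 ×ˢ Set.Icc (-1 : ℝ) 1)) :=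
  pressure_limsup_le_sup_pUP_general J11 J12 J22 h1 h2 α hα
end

section
/- Explicit finite-volume lower bound for the pressure: for any positive integers N1, N2 with N = N1 + N2 and α = N1/N, and for any reals r1, r2, writing t1 = tanh r1 and t2 = tanh r2, one has p_N ≥ log 2 + α·log cosh r1 + (1−α)·log cosh r2 + (1/2)·(J11 α² t1² + J22 (1−α)² t2² + 2 J12 α(1−α) t1 t2) + α h1 t1 + (1−α) h2 t2 − α r1 t1 − (1−α) r2 t2 + J11 α/(2N) + J22 (1−α)/(2N) − J11 α t1²/N − J22 (1−α) t2²/N. -/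
open Real Filter

/-!
Gibbs variational principle: for any positive probability weights `ν` on configurations,
`log ∑ exp (-H) ≥ ∑ ν (-H - log ν)` (Jensen for the concave `log`). Take for `ν` the product of
tilted coins `exp (r s) / (2 cosh r)` with field `r1` on block `A` and `r2` on block `B`. Under
`ν` the spins are independent with means `tanh r`, so the energy is explicit, including the
diagonal `i = j` terms `J11 α (1 - t1²) / (2N)` and `J22 (1 - α) (1 - t2²) / (2N)`, and so is the
entropy. The stated bound is this mean-field value minus `(J11 α t1² + J22 (1 - α) t2²) / (2N) ≥ 0`.
-/

open Finset

theorem spin_mul_self (b : Bool) : spin b * spin b = 1 := by cases b <;> simp [spin]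

theorem sum_mul_sub_log_le_log_sum_exp {Ω : Type*} [Fintype Ω] {ν : Ω → ℝ}
    (hν : ∀ a, 0 < ν a) (hν1 : ∑ a, ν a = 1) (f : Ω → ℝ) :
    ∑ a, ν a * (f a - log (ν a)) ≤ log (∑ a, exp (f a)) := by
  have jensen := strictConcaveOn_log_Ioi.concaveOn.le_map_sum (t := univ) (w := ν)
    (p := fun a => exp (f a) / ν a) (fun a _ => (hν a).le) hν1
    (fun a _ => div_pos (exp_pos _) (hν a))
  simpa only [smul_eq_mul, mul_div_cancel₀ _ (hν _).ne',
    log_div (exp_ne_zero _) (hν _).ne', log_exp] using jensen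

section ProductWeight

variable {ι β : Type*} [Fintype ι] [Fintype β]

def productWeight (w : ι → β → ℝ) (σ : ι → β) : ℝ := ∏ i, w i (σ i)

variable [DecidableEq ι]

theorem sum_productWeight_mul_prod (w F : ι → β → ℝ) :
    ∑ σ, productWeight w σ * ∏ i, F i (σ i) = ∏ i, ∑ b, w i b * F i b := by
  simp only [productWeight, ← prod_mul_distrib]
  exact (Fintype.prod_sum fun i b => w i b * F i b).symm

variable {w : ι → β → ℝ}

theorem sum_productWeight (hw : ∀ i, ∑ b, w i b = 1) : ∑ σ, productWeight w σ = 1 := by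
  simpa [hw] using sum_productWeight_mul_prod w (fun _ _ => 1)

theorem sum_productWeight_mul_apply (hw : ∀ i, ∑ b, w i b = 1) (k : ι) (f : β → ℝ) :
    ∑ σ, productWeight w σ * f (σ k) = ∑ b, w k b * f b := by
  have := sum_productWeight_mul_prod w (fun i b => if i = k then f b else 1)
  simp only [prod_ite_eq', mem_univ, if_true, mul_ite, mul_one] at this
  rw [this, prod_eq_single k (fun i _ hik => by simp [hik, hw])] <;> simp

theorem sum_productWeight_mul_apply_mul_apply (hw : ∀ i, ∑ b, w i b = 1) {k l : ι}
    (hkl : k ≠ l) (f g : β → ℝ) :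
    ∑ σ, productWeight w σ * (f (σ k) * g (σ l)) = (∑ b, w k b * f b) * ∑ b, w l b * g b := by
  have := sum_productWeight_mul_prod w
    (fun i b => (if i = k then f b else 1) * (if i = l then g b else 1))
  simp only [prod_mul_distrib, prod_ite_eq', mem_univ, if_true] at this
  rw [this, ← prod_subset (subset_univ {k, l}), prod_pair hkl]
  · simp [hkl, hkl.symm]
  · intro i _ hi
    simp only [mem_insert, mem_singleton, not_or] at hi
    simp [hi.1, hi.2, hw]

theorem sum_productWeight_mul_sum (hw : ∀ i, ∑ b, w i b = 1) (f : ι → β → ℝ) :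
    ∑ σ, productWeight w σ * ∑ i, f i (σ i) = ∑ i, ∑ b, w i b * f i b := by
  simp only [mul_sum]
  rw [sum_comm]
  exact sum_congr rfl fun i _ => sum_productWeight_mul_apply hw i (f i)

theorem sum_productWeight_mul_sum_mul_sum (hw : ∀ i, ∑ b, w i b = 1) (f g : ι → β → ℝ) :
    ∑ σ, productWeight w σ * ((∑ i, f i (σ i)) * ∑ j, g j (σ j)) =
      (∑ i, ∑ b, w i b * f i b) * (∑ j, ∑ b, w j b * g j b) +
        ∑ i, (∑ b, w i b * (f i b * g i b) - (∑ b, w i b * f i b) * ∑ b, w i b * g i b) := by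
  have pair : ∀ i j, ∑ σ, productWeight w σ * (f i (σ i) * g j (σ j)) =
      (∑ b, w i b * f i b) * (∑ b, w j b * g j b) + if i = j then
        ∑ b, w i b * (f i b * g i b) - (∑ b, w i b * f i b) * ∑ b, w i b * g i b else 0 := by
    intro i j
    by_cases hij : i = j
    · subst hij
      simp [sum_productWeight_mul_apply hw i fun b => f i b * g i b]
    · simp [sum_productWeight_mul_apply_mul_apply hw hij, hij]
  have swap : ∑ σ, productWeight w σ * ((∑ i, f i (σ i)) * ∑ j, g j (σ j)) =
      ∑ i, ∑ j, ∑ σ, productWeight w σ * (f i (σ i) * g j (σ j)) := by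
    simp only [sum_mul_sum]
    simp only [mul_sum]
    rw [sum_comm]
    exact sum_congr rfl fun i _ => sum_comm
  simp only [swap, pair, sum_add_distrib, sum_ite_eq, mem_univ, if_true, ← sum_mul_sum]

theorem sum_productWeight_mul_log (hw : ∀ i, ∑ b, w i b = 1) (hpos : ∀ i b, 0 < w i b) :
    ∑ σ, productWeight w σ * log (productWeight w σ) = ∑ i, ∑ b, w i b * log (w i b) := by
  simp only [productWeight, log_prod fun i _ => (hpos i _).ne']
  exact sum_productWeight_mul_sum hw fun i b => log (w i b)

end ProductWeight

noncomputable def tiltedCoin (r : ℝ) (b : Bool) : ℝ := exp (r * spin b) / (2 * cosh r)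

section TiltedCoin
variable (r : ℝ)

theorem tiltedCoin_pos (b : Bool) : 0 < tiltedCoin r b := by
  unfold tiltedCoin; positivity

theorem sum_tiltedCoin : ∑ b, tiltedCoin r b = 1 := by
  rw [Fintype.sum_bool, tiltedCoin, tiltedCoin, ← add_div, div_eq_one_iff_eq (by positivity),
    cosh_eq]
  simp only [spin, ↓reduceIte, mul_one, Bool.false_eq_true, mul_neg]
  ring

theorem sum_tiltedCoin_mul_spin : ∑ b, tiltedCoin r b * spin b = tanh r := by
  rw [Fintype.sum_bool, tiltedCoin, tiltedCoin, tanh_eq_sinh_div_cosh, sinh_eq]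
  field_simp
  simp [spin, sub_eq_add_neg]

theorem sum_tiltedCoin_mul_log :
    ∑ b, tiltedCoin r b * log (tiltedCoin r b) = r * tanh r - log (2 * cosh r) := by
  have hlog : ∀ b, log (tiltedCoin r b) = r * spin b - log (2 * cosh r) := fun b => by
    rw [tiltedCoin, log_div (exp_ne_zero _) (by positivity), log_exp]
  simp only [hlog, mul_sub, sum_sub_distrib, ← sum_mul, sum_tiltedCoin, mul_left_comm _ r,
    ← mul_sum, sum_tiltedCoin_mul_spin, one_mul]

end TiltedCoin

section TiltedProduct
variable {ι : Type*} [Fintype ι] (r : ι → ℝ)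

noncomputable def spinSum (a : ι → ℝ) (σ : ι → Bool) : ℝ := ∑ i, a i * spin (σ i)

noncomputable def tiltedProduct : (ι → Bool) → ℝ := productWeight fun i => tiltedCoin (r i)

theorem tiltedProduct_pos (σ : ι → Bool) : 0 < tiltedProduct r σ :=
  prod_pos fun _ _ => tiltedCoin_pos _ _

theorem sum_tiltedProduct [DecidableEq ι] : ∑ σ, tiltedProduct r σ = 1 :=
  sum_productWeight fun i => sum_tiltedCoin (r i)

theorem sum_tiltedProduct_mul_spinSum [DecidableEq ι] (a : ι → ℝ) :
    ∑ σ, tiltedProduct r σ * spinSum a σ = ∑ i, a i * tanh (r i) := by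
  simp only [tiltedProduct, spinSum]
  rw [sum_productWeight_mul_sum (fun i => sum_tiltedCoin (r i)) fun i b => a i * spin b]
  simp only [mul_left_comm _ (a _), ← mul_sum, sum_tiltedCoin_mul_spin]

theorem sum_tiltedProduct_mul_spinSum_mul_spinSum [DecidableEq ι] (a c : ι → ℝ) :
    ∑ σ, tiltedProduct r σ * (spinSum a σ * spinSum c σ) =
      (∑ i, a i * tanh (r i)) * (∑ i, c i * tanh (r i)) +
        ∑ i, a i * c i * (1 - tanh (r i) ^ 2) := by
  simp only [tiltedProduct, spinSum]
  rw [sum_productWeight_mul_sum_mul_sum (fun i => sum_tiltedCoin (r i))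
    (fun i b => a i * spin b) fun i b => c i * spin b]
  have spin_sq (i : ι) (b : Bool) : a i * spin b * (c i * spin b) = a i * c i := by
    rw [mul_mul_mul_comm, spin_mul_self, mul_one]
  simp only [spin_sq, mul_left_comm _ (a _), mul_left_comm _ (c _), ← mul_sum,
    sum_tiltedCoin_mul_spin]
  congr 1
  exact sum_congr rfl fun i _ => by rw [← sum_mul, sum_tiltedCoin]; ring

theorem sum_tiltedProduct_mul_log [DecidableEq ι] :
    ∑ σ, tiltedProduct r σ * log (tiltedProduct r σ) =
      ∑ i, (r i * tanh (r i) - log (2 * cosh (r i))) := by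
  rw [tiltedProduct, sum_productWeight_mul_log (fun i => sum_tiltedCoin (r i))
    fun i => tiltedCoin_pos (r i)]
  simp only [sum_tiltedCoin_mul_log]

end TiltedProduct

section BipartiteModel
variable {N1 N2 : ℕ}

def blockA (N1 N2 : ℕ) (i : Fin (N1 + N2)) : ℝ := if (i : ℕ) < N1 then 1 else 0

def blockB (N1 N2 : ℕ) (i : Fin (N1 + N2)) : ℝ := if N1 ≤ (i : ℕ) then 1 else 0

def blockField (N1 N2 : ℕ) (r1 r2 : ℝ) (i : Fin (N1 + N2)) : ℝ := if (i : ℕ) < N1 then r1 else r2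

theorem ham_eq_spinSum (J11 J12 J22 h1 h2 : ℝ) (σ : Fin (N1 + N2) → Bool) :
    ham J11 J12 J22 h1 h2 N1 N2 σ =
      -(1 / (2 * ((N1 + N2 : ℕ) : ℝ))) * (J11 * spinSum (blockA N1 N2) σ ^ 2
        + 2 * J12 * (spinSum (blockA N1 N2) σ * spinSum (blockB N1 N2) σ)
        + J22 * spinSum (blockB N1 N2) σ ^ 2)
      - h1 * spinSum (blockA N1 N2) σ - h2 * spinSum (blockB N1 N2) σ := by
  simp only [ham, spinSum, blockA, blockB, boole_mul, sq, sum_mul_sum, ite_zero_mul_ite_zero]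

theorem sum_tiltedProduct_mul_neg_ham (J11 J12 J22 h1 h2 r1 r2 : ℝ) :
    ∑ σ, tiltedProduct (blockField N1 N2 r1 r2) σ * -ham J11 J12 J22 h1 h2 N1 N2 σ =
      (J11 * (N1 ^ 2 * tanh r1 ^ 2 + N1 * (1 - tanh r1 ^ 2))
        + 2 * J12 * (N1 * N2 * (tanh r1 * tanh r2))
        + J22 * (N2 ^ 2 * tanh r2 ^ 2 + N2 * (1 - tanh r2 ^ 2))) / (2 * ((N1 + N2 : ℕ) : ℝ))
      + h1 * (N1 * tanh r1) + h2 * (N2 * tanh r2) := by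
  set ν := tiltedProduct (blockField N1 N2 r1 r2)
  set mA := spinSum (blockA N1 N2)
  set mB := spinSum (blockB N1 N2)
  have expand (σ : Fin (N1 + N2) → Bool) : ν σ * -ham J11 J12 J22 h1 h2 N1 N2 σ =
      (J11 * (ν σ * (mA σ * mA σ)) + 2 * J12 * (ν σ * (mA σ * mB σ))
        + J22 * (ν σ * (mB σ * mB σ))) / (2 * ((N1 + N2 : ℕ) : ℝ))
      + h1 * (ν σ * mA σ) + h2 * (ν σ * mB σ) := by
    rw [ham_eq_spinSum]; ring
  simp only [expand, sum_add_distrib, ← sum_div, ← mul_sum, ν, mA, mB,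
    sum_tiltedProduct_mul_spinSum, sum_tiltedProduct_mul_spinSum_mul_spinSum]
  simp only [blockA, blockB, blockField, ite_mul, one_mul, zero_mul, mul_ite, mul_one, mul_zero,
    sum_sub_distrib, Fin.sum_univ_add, Fin.val_castAdd, Fin.val_natAdd, Fin.is_lt, ↓reduceIte,
    fun i : Fin N1 => not_le.mpr i.isLt, add_lt_iff_neg_left, not_lt_zero, le_add_iff_nonneg_right,
    zero_le, sum_const, card_univ, Fintype.card_fin, nsmul_eq_mul, add_zero,
    zero_add, Nat.cast_add, add_left_inj]
  ring

theorem sum_tiltedProduct_mul_log_blockField (r1 r2 : ℝ) :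
    ∑ σ, tiltedProduct (blockField N1 N2 r1 r2) σ *
        log (tiltedProduct (blockField N1 N2 r1 r2) σ) =
      N1 * (r1 * tanh r1 - log (2 * cosh r1)) + N2 * (r2 * tanh r2 - log (2 * cosh r2)) := by
  rw [sum_tiltedProduct_mul_log]
  simp only [blockField, ite_mul, sum_sub_distrib, Fin.sum_univ_add, Fin.val_castAdd,
    Fin.val_natAdd, Fin.is_lt, ↓reduceIte, add_lt_iff_neg_left, not_lt_zero, sum_const, card_univ,
    Fintype.card_fin, nsmul_eq_mul]
  ring

theorem gibbs_variational_le_pressure {ν : (Fin (N1 + N2) → Bool) → ℝ} (hν : ∀ σ, 0 < ν σ)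
    (hν1 : ∑ σ, ν σ = 1) (J11 J12 J22 h1 h2 : ℝ) :
    (∑ σ, ν σ * -ham J11 J12 J22 h1 h2 N1 N2 σ - ∑ σ, ν σ * log (ν σ)) / ((N1 + N2 : ℕ) : ℝ)
      ≤ pressure J11 J12 J22 h1 h2 N1 N2 := by
  rw [pressure, one_div_mul_eq_div, ← sum_sub_distrib]
  gcongr
  simpa only [mul_sub] using
    sum_mul_sub_log_le_log_sum_exp hν hν1 fun σ => -ham J11 J12 J22 h1 h2 N1 N2 σ

end BipartiteModel

theorem pressure_finite_volume_lower_bound_general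
    (J11 J12 J22 h1 h2 : ℝ) (hJ11 : 0 < J11) (hJ22 : 0 < J22)
    (N1 N2 : ℕ) (hN1 : 0 < N1)
    (r1 r2 α NR t1 t2 : ℝ)
    (hα : α = (N1 : ℝ) / ((N1 + N2 : ℕ) : ℝ)) (hNR : NR = ((N1 + N2 : ℕ) : ℝ))
    (ht1 : t1 = Real.tanh r1) (ht2 : t2 = Real.tanh r2) :
    pressure J11 J12 J22 h1 h2 N1 N2 ≥
      Real.log 2 + α * Real.log (Real.cosh r1) + (1 - α) * Real.log (Real.cosh r2)
        + (1 / 2) * (J11 * α ^ 2 * t1 ^ 2 + J22 * (1 - α) ^ 2 * t2 ^ 2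
            + 2 * J12 * α * (1 - α) * t1 * t2)
        + α * h1 * t1 + (1 - α) * h2 * t2 - α * r1 * t1 - (1 - α) * r2 * t2
        + J11 * α / (2 * NR) + J22 * (1 - α) / (2 * NR)
        - J11 * α * t1 ^ 2 / NR - J22 * (1 - α) * t2 ^ 2 / NR := by
  subst hα hNR ht1 ht2
  have hN : (0 : ℝ) < ((N1 + N2 : ℕ) : ℝ) := Nat.cast_pos.mpr (by omega)
  have trial := gibbs_variational_le_pressure
    (tiltedProduct_pos (blockField N1 N2 r1 r2)) (sum_tiltedProduct _) J11 J12 J22 h1 h2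
  rw [sum_tiltedProduct_mul_neg_ham, sum_tiltedProduct_mul_log_blockField] at trial
  have slack : 0 ≤ (J11 * N1 * tanh r1 ^ 2 + J22 * N2 * tanh r2 ^ 2)
      / (2 * ((N1 + N2 : ℕ) : ℝ) ^ 2) := by positivity
  refine ge_iff_le.mpr (le_trans (sub_nonneg.mp (slack.trans_eq ?_)) trial)
  rw [log_mul two_ne_zero (cosh_pos _).ne', log_mul two_ne_zero (cosh_pos _).ne']
  field_simp
  push_cast
  ring

/-- explicit finite-volume lower bound for the pressure, with
`α = N1/N`, `t1 = tanh r1`, `t2 = tanh r2`. -/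
theorem pressure_finite_volume_lower_bound
    (J11 J12 J22 h1 h2 : ℝ) (hJ11 : 0 < J11) (hJ22 : 0 < J22)
    (N1 N2 : ℕ) (hN1 : 0 < N1) (hN2 : 0 < N2)
    (r1 r2 α NR t1 t2 : ℝ)
    (hα : α = (N1 : ℝ) / ((N1 + N2 : ℕ) : ℝ)) (hNR : NR = ((N1 + N2 : ℕ) : ℝ))
    (ht1 : t1 = Real.tanh r1) (ht2 : t2 = Real.tanh r2) :
    pressure J11 J12 J22 h1 h2 N1 N2 ≥
      Real.log 2 + α * Real.log (Real.cosh r1) + (1 - α) * Real.log (Real.cosh r2)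
        + (1 / 2) * (J11 * α ^ 2 * t1 ^ 2 + J22 * (1 - α) ^ 2 * t2 ^ 2
            + 2 * J12 * α * (1 - α) * t1 * t2)
        + α * h1 * t1 + (1 - α) * h2 * t2 - α * r1 * t1 - (1 - α) * r2 * t2
        + J11 * α / (2 * NR) + J22 * (1 - α) / (2 * NR)
        - J11 * α * t1 ^ 2 / NR - J22 * (1 - α) * t2 ^ 2 / NR :=
  pressure_finite_volume_lower_bound_general J11 J12 J22 h1 h2 hJ11 hJ22 N1 N2 hN1 r1 r2 α NR t1 t2
    hα hNR ht1 ht2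
end

section
/- Integral bound on magnetization fluctuations: for any positive integers N1, N2 with N = N1 + N2, α = N1/N, and any reals a < b, the integral over h1 ∈ [a, b] of the Gibbs variance of m1 satisfies |∫_a^b (ω_N(m1²) − ω_N(m1)²) dh1| ≤ 2/(N·α); in particular this integral is O(1/N) as N → ∞. -/
open Real Filter

/-- The Gibbs state `ω_N(f)` of an observable `f`. -/
noncomputable def gibbs (J11 J12 J22 h1 h2 : ℝ) (N1 N2 : ℕ)
    (f : (Fin (N1 + N2) → Bool) → ℝ) : ℝ :=
  (∑ σ : Fin (N1 + N2) → Bool, f σ * Real.exp (-(ham J11 J12 J22 h1 h2 N1 N2 σ))) /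
    (∑ σ : Fin (N1 + N2) → Bool, Real.exp (-(ham J11 J12 J22 h1 h2 N1 N2 σ)))

/-- The block-`A` magnetization `m1(σ) = (1/N1) Σ_{i ∈ A} σ_i`. -/
noncomputable def mag1 (N1 N2 : ℕ) (σ : Fin (N1 + N2) → Bool) : ℝ :=
  (1 / (N1 : ℝ)) * ∑ i : Fin (N1 + N2), (if (i : ℕ) < N1 then spin (σ i) else 0)

/-!
Shifting the field by `t` tilts the Gibbs weights by `exp (t N1 m1)`, so the derivative of
`t ↦ ω(m1)` is `N1` times the variance of `m1`. The integral of the variance over `[a, b]` is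
therefore `(ω_b(m1) - ω_a(m1)) / N1`, and both averages lie in `[-1, 1]`.
-/

section GibbsAverage

variable {Ω : Type*} [Fintype Ω]

noncomputable def gibbsAvg (H f : Ω → ℝ) : ℝ :=
  (∑ σ, f σ * exp (-H σ)) / ∑ σ, exp (-H σ)

noncomputable def gibbsVariance (H f : Ω → ℝ) : ℝ :=
  gibbsAvg H (f ^ 2) - gibbsAvg H f ^ 2

theorem gibbsAvg_const_mul (H f : Ω → ℝ) (c : ℝ) :
    gibbsAvg H (fun σ => c * f σ) = c * gibbsAvg H f := by
  simp only [gibbsAvg, mul_assoc, ← Finset.mul_sum, mul_div_assoc]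

theorem sum_exp_neg_pos [Nonempty Ω] (H : Ω → ℝ) : 0 < ∑ σ, exp (-H σ) :=
  Finset.sum_pos (fun _ _ => exp_pos _) Finset.univ_nonempty

theorem abs_gibbsAvg_le [Nonempty Ω] (H : Ω → ℝ) {f : Ω → ℝ} {C : ℝ} (hf : ∀ σ, |f σ| ≤ C) :
    |gibbsAvg H f| ≤ C := by
  have hZ := sum_exp_neg_pos H
  rw [gibbsAvg, abs_div, abs_of_pos hZ, div_le_iff₀ hZ, Finset.mul_sum]
  calc |∑ σ, f σ * exp (-H σ)| ≤ ∑ σ, |f σ * exp (-H σ)| := Finset.abs_sum_le_sum_abs _ _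
    _ ≤ ∑ σ, C * exp (-H σ) := Finset.sum_le_sum fun σ _ => by
      rw [abs_mul, abs_of_pos (exp_pos _)]
      exact mul_le_mul_of_nonneg_right (hf σ) (exp_pos _).le

theorem hasDerivAt_sum_mul_exp_tilt (H S f : Ω → ℝ) (t : ℝ) :
    HasDerivAt (fun t => ∑ σ, f σ * exp (-(H - t • S) σ))
      (∑ σ, (f σ * S σ) * exp (-(H - t • S) σ)) t := by
  refine HasDerivAt.fun_sum fun σ _ => ?_
  have hexp : HasDerivAt (fun t => exp (-(H - t • S) σ)) (exp (-(H - t • S) σ) * S σ) t := by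
    simpa using (((hasDerivAt_id t).mul_const (S σ)).sub_const (H σ)).exp
  exact (hexp.const_mul (f σ)).congr_deriv (by ring)

theorem hasDerivAt_gibbsAvg_tilt [Nonempty Ω] (H S f : Ω → ℝ) (t : ℝ) :
    HasDerivAt (fun t => gibbsAvg (H - t • S) f)
      (gibbsAvg (H - t • S) (fun σ => f σ * S σ) -
        gibbsAvg (H - t • S) f * gibbsAvg (H - t • S) S) t := by
  have hZ := sum_exp_neg_pos (H - t • S)
  have hquot := (hasDerivAt_sum_mul_exp_tilt H S f t).div
    (by simpa only [Pi.one_apply, one_mul] using hasDerivAt_sum_mul_exp_tilt H S 1 t) hZ.ne'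
  refine hquot.congr_deriv ?_
  simp only [gibbsAvg]
  field_simp

theorem continuous_gibbsAvg_tilt [Nonempty Ω] (H S f : Ω → ℝ) :
    Continuous fun t : ℝ => gibbsAvg (H - t • S) f :=
  continuous_iff_continuousAt.2 fun t => (hasDerivAt_gibbsAvg_tilt H S f t).continuousAt

theorem hasDerivAt_gibbsAvg_tilt_self [Nonempty Ω] (H X : Ω → ℝ) (k t : ℝ) :
    HasDerivAt (fun t => gibbsAvg (H - t • (k • X)) X)
      (k * gibbsVariance (H - t • (k • X)) X) t := by
  refine (hasDerivAt_gibbsAvg_tilt H (k • X) X t).congr_deriv ?_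
  have hsq : (fun σ => X σ * (k • X) σ) = fun σ => k * (X ^ 2) σ := by
    ext σ; simp only [Pi.smul_apply, Pi.pow_apply, smul_eq_mul]; ring
  rw [hsq, gibbsAvg_const_mul, show k • X = fun σ => k * X σ from rfl, gibbsAvg_const_mul,
    gibbsVariance]
  ring

theorem integral_gibbsVariance_tilt [Nonempty Ω] (H X : Ω → ℝ) {k : ℝ} (hk : k ≠ 0)
    (a b : ℝ) :
    ∫ t in a..b, gibbsVariance (H - t • (k • X)) X =
      (gibbsAvg (H - b • (k • X)) X - gibbsAvg (H - a • (k • X)) X) / k := by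
  have hcont : Continuous fun t : ℝ => k * gibbsVariance (H - t • (k • X)) X := by
    unfold gibbsVariance
    exact continuous_const.mul
      ((continuous_gibbsAvg_tilt _ _ _).sub ((continuous_gibbsAvg_tilt _ _ _).pow 2))
  have hftc := intervalIntegral.integral_eq_sub_of_hasDerivAt
    (fun t _ => hasDerivAt_gibbsAvg_tilt_self H X k t) (hcont.intervalIntegrable a b)
  rw [intervalIntegral.integral_const_mul] at hftc
  rw [← hftc, mul_div_cancel_left₀ _ hk]

theorem abs_integral_gibbsVariance_tilt_le [Nonempty Ω] (H : Ω → ℝ) {X : Ω → ℝ} {k C : ℝ}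
    (hk : 0 < k) (hX : ∀ σ, |X σ| ≤ C) (a b : ℝ) :
    |∫ t in a..b, gibbsVariance (H - t • (k • X)) X| ≤ 2 * C / k := by
  rw [integral_gibbsVariance_tilt H X hk.ne', abs_div, abs_of_pos hk]
  gcongr
  calc _ ≤ |gibbsAvg (H - b • (k • X)) X| + |gibbsAvg (H - a • (k • X)) X| := abs_sub _ _
    _ ≤ C + C := add_le_add (abs_gibbsAvg_le _ hX) (abs_gibbsAvg_le _ hX)
    _ = 2 * C := by ring

end GibbsAverage

theorem gibbs_eq_gibbsAvg (J11 J12 J22 h1 h2 : ℝ) (N1 N2 : ℕ)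
    (f : (Fin (N1 + N2) → Bool) → ℝ) :
    gibbs J11 J12 J22 h1 h2 N1 N2 f = gibbsAvg (ham J11 J12 J22 h1 h2 N1 N2) f :=
  rfl

theorem ham_eq_sub_smul (J11 J12 J22 h1 h2 : ℝ) {N1 : ℕ} (N2 : ℕ) (hN1 : N1 ≠ 0) :
    ham J11 J12 J22 h1 h2 N1 N2 =
      ham J11 J12 J22 0 h2 N1 N2 - h1 • ((N1 : ℝ) • mag1 N1 N2) := by
  ext σ
  simp only [ham, mag1, Pi.sub_apply, Pi.smul_apply, smul_eq_mul]
  field_simp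
  ring

theorem abs_spin (b : Bool) : |spin b| = 1 := by
  cases b <;> simp [spin]

theorem abs_mag1_le_one {N1 : ℕ} (N2 : ℕ) (σ : Fin (N1 + N2) → Bool) : |mag1 N1 N2 σ| ≤ 1 := by
  have hsum : ∑ i : Fin (N1 + N2), (if (i : ℕ) < N1 then spin (σ i) else 0) =
      ∑ i : Fin N1, spin (σ (Fin.castAdd N2 i)) := by
    simp [Fin.sum_univ_add]
  have hbound : |∑ i : Fin N1, spin (σ (Fin.castAdd N2 i))| ≤ N1 := by
    simpa [abs_spin] using
      Finset.abs_sum_le_sum_abs (fun i : Fin N1 => spin (σ (Fin.castAdd N2 i))) Finset.univ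
  rw [mag1, hsum, one_div_mul_eq_div, abs_div, Nat.abs_cast]
  exact div_le_one_of_le₀ hbound (Nat.cast_nonneg N1)

theorem magnetization_fluctuation_integral_bound_general
    (J11 J12 J22 h2 : ℝ)
    (N1 N2 : ℕ) (hN1 : 0 < N1)
    (α NR : ℝ) (hα : α = (N1 : ℝ) / ((N1 + N2 : ℕ) : ℝ)) (hNR : NR = ((N1 + N2 : ℕ) : ℝ))
    (a b : ℝ) :
    |∫ h1 in a..b,
        (gibbs J11 J12 J22 h1 h2 N1 N2 (fun σ => (mag1 N1 N2 σ) ^ 2) -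
          (gibbs J11 J12 J22 h1 h2 N1 N2 (mag1 N1 N2)) ^ 2)| ≤ 2 / (NR * α) := by
  have hN1R : (0 : ℝ) < N1 := by exact_mod_cast hN1
  have hNRα : NR * α = N1 := by
    rw [hNR, hα]
    field_simp
  have hvar : ∀ h1, gibbs J11 J12 J22 h1 h2 N1 N2 (fun σ => (mag1 N1 N2 σ) ^ 2) -
      (gibbs J11 J12 J22 h1 h2 N1 N2 (mag1 N1 N2)) ^ 2 =
      gibbsVariance (ham J11 J12 J22 0 h2 N1 N2 - h1 • ((N1 : ℝ) • mag1 N1 N2)) (mag1 N1 N2) :=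
    fun h1 => by
      rw [← ham_eq_sub_smul J11 J12 J22 h1 h2 N2 hN1.ne', gibbs_eq_gibbsAvg, gibbs_eq_gibbsAvg]
      rfl
  simp only [hvar, hNRα]
  simpa only [mul_one] using
    abs_integral_gibbsVariance_tilt_le _ hN1R (abs_mag1_le_one N2) a b

/-- the integral over `h1 ∈ [a,b]` of the Gibbs variance of `m1`
is bounded by `2/(N α)` (with `α = N1/N`), hence is `O(1/N)`. -/
theorem magnetization_fluctuation_integral_bound
    (J11 J12 J22 h2 : ℝ) (hJ11 : 0 < J11) (hJ22 : 0 < J22)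
    (N1 N2 : ℕ) (hN1 : 0 < N1) (hN2 : 0 < N2)
    (α NR : ℝ) (hα : α = (N1 : ℝ) / ((N1 + N2 : ℕ) : ℝ)) (hNR : NR = ((N1 + N2 : ℕ) : ℝ))
    (a b : ℝ) (hab : a < b) :
    |∫ h1 in a..b,
        (gibbs J11 J12 J22 h1 h2 N1 N2 (fun σ => (mag1 N1 N2 σ) ^ 2) -
          (gibbs J11 J12 J22 h1 h2 N1 N2 (mag1 N1 N2)) ^ 2)| ≤ 2 / (NR * α) :=
  magnetization_fluctuation_integral_bound_general J11 J12 J22 h2 N1 N2 hN1 α NR hα hNR a b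
end
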